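/- Let F be a Minkowski norm on ℝ^m with uniformity constant Λ_F, and let B_F := { y ∈ ℝ^m : F(y) < 1 }. Then for every z ≠ 0, vol(𝔹^m) ≤ Λ_F^m · √(det g_z) · vol(B_F), where vol is Lebesgue measure, 𝔹^m is the Euclidean unit ball, and det g_z is the determinant of the matrix (g_z(e_i,e_j)) in the standard basis. -/

import Mathlib

open MeasureTheory

/-- The fundamental tensor `g_y(u, v) := (1/2) D²(F²)(y)[u, v]` of a Minkowski norm `F`. -/
noncomputable def fundTensor (m : ℕ) (F : EuclideanSpace ℝ (Fin m) → ℝ)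
    (y u v : EuclideanSpace ℝ (Fin m)) : ℝ :=
  (1 / 2) * (fderiv ℝ (fderiv ℝ (fun x => (F x) ^ 2)) y u) v

/-- A Minkowski norm on `ℝ^m`: positive and smooth away from `0`, positively homogeneous of
degree `1`, with positive definite fundamental tensor. -/
structure IsMinkowskiNorm (m : ℕ) (F : EuclideanSpace ℝ (Fin m) → ℝ) : Prop where
  nonneg : ∀ y, 0 ≤ F y
  pos : ∀ y, y ≠ 0 → 0 < F y
  smooth : ContDiffOn ℝ (⊤ : ℕ∞) F {(0 : EuclideanSpace ℝ (Fin m))}ᶜ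
  homog : ∀ c : ℝ, 0 < c → ∀ y, F (c • y) = c * F y
  posdef : ∀ y, y ≠ 0 → ∀ v, v ≠ 0 → 0 < fundTensor m F y v v

/-- Auxiliary: square of the Euclidean norm as a sum. -/
lemma my_norm_sq_eq {m : ℕ} (v : EuclideanSpace ℝ (Fin m)) : ‖v‖ ^ 2 = ∑ i, v i * v i := by
  rw [EuclideanSpace.norm_eq, Real.sq_sqrt (by positivity)]
  exact Finset.sum_congr rfl fun i _ => by
    rw [Real.norm_eq_abs, sq_abs, sq]

/-- Euler's relation: `g_y(y,y) = F(y)^2`. -/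
lemma my_euler {m : ℕ} {F : EuclideanSpace ℝ (Fin m) → ℝ} (hF : IsMinkowskiNorm m F)
    {y : EuclideanSpace ℝ (Fin m)} (hy : y ≠ 0) :
    fundTensor m F y y y = F y ^ 2 := by
  have hopen : IsOpen ({(0 : EuclideanSpace ℝ (Fin m))}ᶜ) := isOpen_compl_singleton
  have hfC : ContDiffOn ℝ (⊤ : ℕ∞) (fun x => F x ^ 2) {(0 : EuclideanSpace ℝ (Fin m))}ᶜ :=
    hF.smooth.pow 2
  have hfAt : ∀ x : EuclideanSpace ℝ (Fin m), x ≠ 0 → ContDiffAt ℝ (⊤ : ℕ∞) (fun x => F x ^ 2) x :=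
    fun x hx => hfC.contDiffAt (hopen.mem_nhds hx)
  set f : EuclideanSpace ℝ (Fin m) → ℝ := fun x => F x ^ 2 with hfdef
  have hsm : ∀ t : ℝ, HasDerivAt (fun s : ℝ => s • y) y t := by
    intro t
    simpa using (hasDerivAt_id t).smul_const y
  have hL : ∀ t : ℝ, 0 < t → fderiv ℝ f (t • y) y = 2 * t * f y := by
    intro t ht
    have hty : t • y ≠ 0 := smul_ne_zero ht.ne' hy
    have hdf : DifferentiableAt ℝ f (t • y) := (hfAt _ hty).differentiableAt (by simp)
    have h1 : HasDerivAt (fun s : ℝ => f (s • y)) (fderiv ℝ f (t • y) y) t :=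
      hdf.hasFDerivAt.comp_hasDerivAt (f := fun s : ℝ => s • y) t (hsm t)
    have h2 : HasDerivAt (fun s : ℝ => s ^ 2 * f y) (2 * t * f y) t := by
      simpa [pow_one] using (hasDerivAt_pow 2 t).mul_const (f y)
    have heq : (fun s : ℝ => f (s • y)) =ᶠ[nhds t] fun s : ℝ => s ^ 2 * f y := by
      filter_upwards [isOpen_Ioi.mem_nhds ht] with s hs
      have hhom : F (s • y) = s * F y := hF.homog s hs y
      simp only [hfdef, hhom, mul_pow]
    have h2' : HasDerivAt (fun s : ℝ => f (s • y)) (2 * t * f y) t :=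
      h2.congr_of_eventuallyEq heq
    exact h1.unique h2'
  have hL2 : ContDiffAt ℝ (⊤ : ℕ∞) (fderiv ℝ f) y := (hfAt y hy).fderiv_right (by simp)
  have hLd : DifferentiableAt ℝ (fderiv ℝ f) y := hL2.differentiableAt (by simp)
  have h3 : HasDerivAt (fun s : ℝ => fderiv ℝ f (s • y)) (fderiv ℝ (fderiv ℝ f) y y) 1 := by
    have h0 : HasFDerivAt (fderiv ℝ f) (fderiv ℝ (fderiv ℝ f) y) ((1 : ℝ) • y) := by
      rw [one_smul]; exact hLd.hasFDerivAt
    exact h0.comp_hasDerivAt (f := fun s : ℝ => s • y) 1 (hsm 1)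
  have h4 : HasDerivAt (fun s : ℝ => fderiv ℝ f (s • y) y) (fderiv ℝ (fderiv ℝ f) y y y) 1 := by
    have := h3.clm_apply (hasDerivAt_const (1 : ℝ) y)
    simpa using this
  have h5 : HasDerivAt (fun s : ℝ => 2 * s * f y) (2 * f y) 1 := by
    simpa using ((hasDerivAt_id (1 : ℝ)).const_mul 2).mul_const (f y)
  have heq2 : (fun s : ℝ => fderiv ℝ f (s • y) y) =ᶠ[nhds 1] fun s : ℝ => 2 * s * f y := by
    filter_upwards [isOpen_Ioi.mem_nhds zero_lt_one] with s hs
    exact hL s hs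
  have h5' : HasDerivAt (fun s : ℝ => fderiv ℝ f (s • y) y) (2 * f y) 1 :=
    h5.congr_of_eventuallyEq heq2
  have key : fderiv ℝ (fderiv ℝ f) y y y = 2 * f y := h4.unique h5'
  show (1 / 2 : ℝ) * (fderiv ℝ (fderiv ℝ f) y y) y = F y ^ 2
  rw [key]
  have : f y = F y ^ 2 := rfl
  rw [this]; ring

/-- Bilinear expansion of the fundamental tensor in the standard basis. -/
lemma my_quad_expand {m : ℕ} (F : EuclideanSpace ℝ (Fin m) → ℝ)
    (z w : EuclideanSpace ℝ (Fin m)) :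
    fundTensor m F z w w = ∑ i, ∑ j, w i * w j *
      fundTensor m F z (EuclideanSpace.single i 1) (EuclideanSpace.single j 1) := by
  have hw : w = ∑ i, w i • EuclideanSpace.single i (1 : ℝ) := by
    have h := (EuclideanSpace.basisFun (Fin m) ℝ).sum_repr w
    simpa [EuclideanSpace.basisFun_apply, EuclideanSpace.basisFun_repr] using h.symm
  set B := fderiv ℝ (fderiv ℝ (fun x => F x ^ 2)) z with hB
  show (1 / 2 : ℝ) * (B w) w = ∑ i, ∑ j, w i * w j *
      ((1 / 2 : ℝ) * (B (EuclideanSpace.single i 1)) (EuclideanSpace.single j 1))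
  conv_lhs => rw [hw]
  rw [map_sum]
  simp only [_root_.map_smul, ContinuousLinearMap.sum_apply, ContinuousLinearMap.smul_apply,
    ContinuousLinearMap.coe_sum', Finset.sum_apply, map_sum, smul_eq_mul, Finset.mul_sum,
    Finset.sum_mul]
  rw [Finset.sum_comm]
  exact Finset.sum_congr rfl fun i _ => Finset.sum_congr rfl fun j _ => by ring

/-- `det g_z`: the determinant of the matrix of the fundamental tensor in the standard basis. -/
noncomputable def fundDet (m : ℕ) (F : EuclideanSpace ℝ (Fin m) → ℝ)
    (z : EuclideanSpace ℝ (Fin m)) : ℝ :=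
  Matrix.det (Matrix.of fun i j =>
    fundTensor m F z (EuclideanSpace.single i 1) (EuclideanSpace.single j 1))

/-- Part (1) of the paper's Proposition 8.1, fiberwise (Busemann–Hausdorff distortion bound):
`vol(𝔹^m) ≤ Λ_F^m √(det g_z) vol(B_F)` for every `z ≠ 0`. -/
theorem busemann_hausdorff_distortion_bound
    (m : ℕ) (hm : 1 ≤ m) (F : EuclideanSpace ℝ (Fin m) → ℝ)
    (hF : IsMinkowskiNorm m F) (Λ : ℝ)
    (hΛ : ∀ y, y ≠ 0 → ∀ z, z ≠ 0 → ∀ w, w ≠ 0 →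
      fundTensor m F y w w ≤ Λ * fundTensor m F z w w) :
    ∀ z : EuclideanSpace ℝ (Fin m), z ≠ 0 →
      (volume (Metric.ball (0 : EuclideanSpace ℝ (Fin m)) 1)).toReal ≤
        Λ ^ m * (Real.sqrt (fundDet m F z) *
          (volume {y : EuclideanSpace ℝ (Fin m) | F y < 1}).toReal) := by
  intro z hz
  classical
  -- Λ ≥ 1
  have hΛ1 : 1 ≤ Λ := by
    have h := hΛ z hz z hz z hz
    have hpos := hF.posdef z hz z hz
    nlinarith
  have hΛ0 : (0 : ℝ) < Λ := lt_of_lt_of_le one_pos hΛ1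
  -- F 0 = 0
  have hF0 : F 0 = 0 := by
    have h := hF.homog 2 (by norm_num) 0
    rw [smul_zero] at h; linarith
  -- the matrix of the fundamental tensor
  set A : Matrix (Fin m) (Fin m) ℝ := Matrix.of (fun i j =>
    fundTensor m F z (EuclideanSpace.single i 1) (EuclideanSpace.single j 1)) with hAdef
  have hdetA : fundDet m F z = A.det := rfl
  have hquad : ∀ w : EuclideanSpace ℝ (Fin m),
      fundTensor m F z w w = dotProduct (fun i => w i) (A.mulVec (fun i => w i)) := by
    intro w
    rw [my_quad_expand]
    simp only [dotProduct, Matrix.mulVec, hAdef, Matrix.of_apply, Finset.mul_sum]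
    exact Finset.sum_congr rfl fun i _ => Finset.sum_congr rfl fun j _ => by ring
  -- symmetry
  have hsymm : IsSymmSndFDerivAt ℝ (fun x => F x ^ 2) z := by
    have hfAt : ContDiffAt ℝ (⊤ : ℕ∞) (fun x => F x ^ 2) z :=
      (hF.smooth.pow 2).contDiffAt (isOpen_compl_singleton.mem_nhds hz)
    exact hfAt.isSymmSndFDerivAt (by rw [minSmoothness_of_isRCLikeNormedField]; exact WithTop.coe_le_coe.mpr le_top)
  have hAherm : A.IsHermitian := by
    apply Matrix.IsHermitian.ext
    intro i j
    rw [star_trivial]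
    show fundTensor m F z (EuclideanSpace.single j 1) (EuclideanSpace.single i 1)
      = fundTensor m F z (EuclideanSpace.single i 1) (EuclideanSpace.single j 1)
    unfold fundTensor
    rw [hsymm]
  -- positive definiteness
  have hApos : A.PosDef := by
    refine Matrix.PosDef.of_dotProduct_mulVec_pos hAherm fun x hx => ?_
    have hw : ((WithLp.equiv 2 (Fin m → ℝ)).symm x) ≠ 0 := by
      intro h
      exact hx (by simpa using congrArg (WithLp.equiv 2 (Fin m → ℝ)) h)
    have hpos := hF.posdef z hz _ hw
    rw [hquad _] at hpos
    have hfun : (fun i => ((WithLp.equiv 2 (Fin m → ℝ)).symm x) i) = x := by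
      funext i; rfl
    rw [hfun] at hpos
    simpa using hpos
  -- square root
  have hAps := hApos.posSemidef
  set S : Matrix (Fin m) (Fin m) ℝ := (open scoped MatrixOrder in CFC.sqrt A) with hSdef
  have hSmul : S * S = A := by
    open scoped MatrixOrder in exact CFC.sqrt_mul_sqrt_self A hAps.nonneg
  have hSherm : S.IsHermitian := by
    open scoped MatrixOrder in exact (Matrix.nonneg_iff_posSemidef.mp (CFC.sqrt_nonneg A)).1
  have hST : S.transpose = S := by
    ext i j
    rw [Matrix.transpose_apply]
    have h := hSherm.apply i j
    rwa [star_trivial] at h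
  have hdetA_pos : 0 < A.det := hApos.det_pos
  have hdetS_ne : S.det ≠ 0 := by
    intro h
    rw [← hSmul, Matrix.det_mul, h, mul_zero] at hdetA_pos
    exact lt_irrefl _ hdetA_pos
  have hsqrtA : Real.sqrt A.det = |S.det| := by
    rw [← hSmul, Matrix.det_mul, ← sq, Real.sqrt_sq_eq_abs]
  -- quadratic form via S
  have hquadS : ∀ x : Fin m → ℝ, dotProduct (S.mulVec x) (S.mulVec x) = dotProduct x (A.mulVec x) := by
    intro x
    rw [Matrix.dotProduct_mulVec (S.mulVec x) S x, ← Matrix.mulVec_transpose, hST,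
      Matrix.mulVec_mulVec, hSmul, dotProduct_comm]
  -- the scaled linear map
  set c : ℝ := Real.sqrt Λ with hcdef
  have hc0 : 0 < c := Real.sqrt_pos.mpr hΛ0
  have hc1 : 1 ≤ c := Real.one_le_sqrt.mpr hΛ1
  have hcc : c * c = Λ := Real.mul_self_sqrt hΛ0.le
  have hcΛ : c ≤ Λ := by nlinarith
  set M : Matrix (Fin m) (Fin m) ℝ := c • S with hMdef
  set T : EuclideanSpace ℝ (Fin m) →ₗ[ℝ] EuclideanSpace ℝ (Fin m) :=
    Matrix.toEuclideanLin M with hTdef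
  have hdetT : LinearMap.det T = M.det := by
    rw [hTdef]
    show LinearMap.det
      (Matrix.toLin (PiLp.basisFun 2 ℝ (Fin m)) (PiLp.basisFun 2 ℝ (Fin m)) M) = M.det
    exact LinearMap.det_toLin _ _
  have hdetM : M.det = c ^ m * S.det := by
    rw [hMdef, Matrix.det_smul]
    simp
  have hdetT_ne : LinearMap.det T ≠ 0 := by
    rw [hdetT, hdetM]
    exact mul_ne_zero (pow_ne_zero _ hc0.ne') hdetS_ne
  -- norm of T w
  have hTnorm : ∀ w : EuclideanSpace ℝ (Fin m),
      ‖T w‖ ^ 2 = Λ * fundTensor m F z w w := by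
    intro w
    rw [my_norm_sq_eq, hquad w]
    have happ : ∀ i, (T w) i = (M.mulVec (fun j => w j)) i := fun i => rfl
    calc ∑ i, (T w) i * (T w) i
        = ∑ i, (M.mulVec (fun j => w j)) i * (M.mulVec (fun j => w j)) i := by
          exact Finset.sum_congr rfl fun i _ => by rw [happ i]
      _ = dotProduct (M.mulVec (fun j => w j)) (M.mulVec (fun j => w j)) := rfl
      _ = Λ * dotProduct (S.mulVec (fun j => w j)) (S.mulVec (fun j => w j)) := by
          rw [hMdef, Matrix.smul_mulVec, smul_dotProduct,
            dotProduct_smul, smul_eq_mul, smul_eq_mul, ← mul_assoc, hcc]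
      _ = Λ * dotProduct (fun j => w j) (A.mulVec (fun j => w j)) := by rw [hquadS]
  -- the inclusion
  have hsub : ⇑T ⁻¹' Metric.ball 0 1 ⊆ {y : EuclideanSpace ℝ (Fin m) | F y < 1} := by
    intro w hw
    have hn : ‖T w‖ < 1 := by
      have := hw
      rwa [Set.mem_preimage, mem_ball_zero_iff] at this
    have hn2 : Λ * fundTensor m F z w w < 1 := by
      rw [← hTnorm w]
      calc ‖T w‖ ^ 2 ≤ ‖T w‖ := by nlinarith [norm_nonneg (T w)]
        _ < 1 := hn
    by_cases hw0 : w = 0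
    · simp only [Set.mem_setOf_eq, hw0, hF0]; norm_num
    · have h1 : F w ^ 2 = fundTensor m F w w w := (my_euler hF hw0).symm
      have h2 : fundTensor m F w w w ≤ Λ * fundTensor m F z w w := hΛ w hw0 z hz w hw0
      have h3 : F w ^ 2 < 1 := by rw [h1]; exact lt_of_le_of_lt h2 hn2
      have : F w < 1 := by nlinarith [hF.nonneg w]
      exact this
  -- the measure computation
  have hmeas := Measure.addHaar_preimage_linearMap
    (volume : Measure (EuclideanSpace ℝ (Fin m))) hdetT_ne (Metric.ball 0 1)
  -- finiteness of the volume of B_F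
  have hBFfin : volume {y : EuclideanSpace ℝ (Fin m) | F y < 1} ≠ ⊤ := by
    obtain ⟨i⟩ : Nonempty (Fin m) := ⟨⟨0, hm⟩⟩
    haveI hnt : Nontrivial (EuclideanSpace ℝ (Fin m)) := by
      refine ⟨⟨EuclideanSpace.single i 1, 0, ?_⟩⟩
      intro h
      have := congrArg norm h
      simp [EuclideanSpace.norm_single] at this
    have hsph : (Metric.sphere (0 : EuclideanSpace ℝ (Fin m)) 1).Nonempty :=
      NormedSpace.sphere_nonempty.mpr zero_le_one
    have hcont : ContinuousOn F (Metric.sphere (0 : EuclideanSpace ℝ (Fin m)) 1) := by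
      apply hF.smooth.continuousOn.mono
      intro x hx
      simp only [Set.mem_compl_iff, Set.mem_singleton_iff]
      intro h
      rw [h] at hx
      simp at hx
    obtain ⟨y₀, hy₀s, hy₀min⟩ :=
      (isCompact_sphere (0 : EuclideanSpace ℝ (Fin m)) 1).exists_isMinOn hsph hcont
    have hy₀ : y₀ ≠ 0 := by
      intro h; rw [h] at hy₀s; simp at hy₀s
    have hε0 : 0 < F y₀ := hF.pos _ hy₀
    have hsub2 : {y : EuclideanSpace ℝ (Fin m) | F y < 1} ⊆
        Metric.ball 0 ((F y₀)⁻¹ + 1) := by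
      intro y hy
      have hy' : F y < 1 := hy
      rw [Metric.mem_ball, dist_zero_right]
      by_cases hy0 : y = 0
      · rw [hy0, norm_zero]; positivity
      · have hn : 0 < ‖y‖ := norm_pos_iff.mpr hy0
        have hu : (‖y‖⁻¹ • y) ∈ Metric.sphere (0 : EuclideanSpace ℝ (Fin m)) 1 := by
          simp [norm_smul, abs_of_nonneg (inv_nonneg.mpr hn.le), inv_mul_cancel₀ hn.ne']
        have h1 : F y₀ ≤ F (‖y‖⁻¹ • y) := hy₀min hu
        have h2 : F y = ‖y‖ * F (‖y‖⁻¹ • y) := by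
          conv_lhs => rw [← smul_inv_smul₀ hn.ne' y]
          rw [hF.homog _ hn _]
        have h3 : ‖y‖ * F y₀ ≤ F y := by
          rw [h2]; exact mul_le_mul_of_nonneg_left h1 hn.le
        have h4 : ‖y‖ * F y₀ < 1 := lt_of_le_of_lt h3 hy'
        have h5 : ‖y‖ < (F y₀)⁻¹ := by
          have hinv : (F y₀)⁻¹ * F y₀ = 1 := inv_mul_cancel₀ hε0.ne'
          nlinarith
        linarith [inv_pos.mpr hε0]
    exact ne_top_of_le_ne_top measure_ball_lt_top.ne (measure_mono hsub2)
  -- put everything together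
  set a : ℝ := (volume (Metric.ball (0 : EuclideanSpace ℝ (Fin m)) 1)).toReal with hadef
  set b : ℝ := (volume {y : EuclideanSpace ℝ (Fin m) | F y < 1}).toReal with hbdef
  have hb0 : 0 ≤ b := ENNReal.toReal_nonneg
  have hle : volume (⇑T ⁻¹' Metric.ball (0 : EuclideanSpace ℝ (Fin m)) 1) ≤
      volume {y : EuclideanSpace ℝ (Fin m) | F y < 1} := measure_mono hsub
  have h6 : |LinearMap.det T|⁻¹ * a ≤ b := by
    have h := ENNReal.toReal_mono hBFfin hle
    rw [hmeas, ENNReal.toReal_mul, ENNReal.toReal_ofReal (abs_nonneg _)] at h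
    rwa [abs_inv] at h
  have habs : 0 < |LinearMap.det T| := abs_pos.mpr hdetT_ne
  have h7 : a ≤ |LinearMap.det T| * b := by
    rw [← inv_mul_le_iff₀ habs] at *
    exact h6
  have habsT : |LinearMap.det T| = c ^ m * |S.det| := by
    rw [hdetT, hdetM, abs_mul, abs_pow, abs_of_pos hc0]
  have h8 : a ≤ Λ ^ m * (|S.det| * b) := by
    calc a ≤ |LinearMap.det T| * b := h7
      _ = c ^ m * (|S.det| * b) := by rw [habsT]; ring
      _ ≤ Λ ^ m * (|S.det| * b) := by
          apply mul_le_mul_of_nonneg_right (pow_le_pow_left₀ hc0.le hcΛ m)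
          positivity
  calc a ≤ Λ ^ m * (|S.det| * b) := h8
    _ = Λ ^ m * (Real.sqrt (fundDet m F z) * b) := by rw [hdetA, hsqrtA]
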